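/- arXiv:2310.03071 — 4 statements merged into one kernel-verified Lean document; each statement's English description precedes it below -/
import Mathlib

section
/- For a state with η fermions on n modes (η ∈ ℕ, 0 ≤ η ≤ n), the symmetry value s_4 = (1/2)·C(n,2) − η(n−η) vanishes if and only if n is a perfect square and η = (n ± √n)/2. -/
/-! Completing the square, `C(n,2)/2 - η(n - η) = ((n - 2η)² - n)/4`, so the value vanishes
exactly when `n - 2η` is an integer square root of `n`, i.e. `n = m²` and `n - 2η = ±m`. -/

theorem choose_two_div_two_sub_mul_sub_eq {K : Type*} [Field K] [CharZero K] (n : ℕ) (x : K) :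
    (n.choose 2 : K) / 2 - x * (n - x) = (((n : K) - 2 * x) ^ 2 - n) / 4 := by
  rw [Nat.cast_choose_two]
  ring

theorem Int.mul_self_eq_natCast_iff (z : ℤ) (n : ℕ) :
    z * z = n ↔ ∃ m : ℕ, m * m = n ∧ (z = m ∨ z = -m) := by
  constructor
  · intro h
    refine ⟨z.natAbs, ?_, z.natAbs_eq⟩
    exact_mod_cast (Int.natAbs_mul_self' z).trans h
  · rintro ⟨m, rfl, rfl | rfl⟩ <;> push_cast <;> ring

theorem stmt0_general (n η : ℕ) :
    ((n.choose 2 : ℚ) / 2 - (η : ℚ) * ((n : ℚ) - (η : ℚ)) = 0) ↔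
      ∃ m : ℕ, m * m = n ∧
        ((2 * (η : ℤ) = (n : ℤ) + (m : ℤ)) ∨ (2 * (η : ℤ) = (n : ℤ) - (m : ℤ))) := by
  have hsquare : (n.choose 2 : ℚ) / 2 - η * (n - η) = 0 ↔
      ((n : ℤ) - 2 * η) * ((n : ℤ) - 2 * η) = n := by
    rw [choose_two_div_two_sub_mul_sub_eq, div_eq_zero_iff, or_iff_left four_ne_zero,
      sub_eq_zero, sq]
    norm_cast
  rw [hsquare, Int.mul_self_eq_natCast_iff]
  refine exists_congr fun m => and_congr_right fun _ => ?_
  omega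

/-- For a state with `η` fermions on `n` modes, the symmetry value
`s₄(n,η) = (1/2)·C(n,2) − η(n−η)` vanishes iff `n` is a perfect square and
`η = (n ± √n)/2`. -/
theorem stmt0 (n η : ℕ) (hn : 1 ≤ n) (hη : η ≤ n) :
    ((n.choose 2 : ℚ) / 2 - (η : ℚ) * ((n : ℚ) - (η : ℚ)) = 0) ↔
      ∃ m : ℕ, m * m = n ∧
        ((2 * (η : ℤ) = (n : ℤ) + (m : ℤ)) ∨ (2 * (η : ℤ) = (n : ℤ) - (m : ℤ))) :=
  stmt0_general n η
end

section
/- If either s_2(n,η) = η − n/2 = 0 or s_4(n,η) = (1/2)·C(n,2) − η(n−η) = 0, then for n > 1 both ancilla-adjusted quantities s'_2(n,η) = η − (n+1)/2 and s'_4(n,η) = (1/2)·C(n+1,2) − η(n+1−η) are nonzero. -/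
/-!
With `d = 2η − n` one has `s₂ = d/2`, `s₄ = (d² − n)/4`, `s'₂ = (d − 1)/2` and
`s'₄ = ((d − 1)² − (n + 1))/4`. The hypothesis says `d = 0` or `d² = n`. If `d = 0`, then
`d ≠ 1` and `(d − 1)² = 1 ≠ n + 1`. If `d² = n`, then `d = 1` would force `n = 1`, and
`(d − 1)² = n + 1 = d² + 1` would force `d = 0`, hence `n = 0`.
-/

section

variable {K : Type*} [Field K] [CharZero K]

theorem choose_two_div_two_sub_mul_eq (n : ℕ) (x : K) :
    (n.choose 2 : K) / 2 - x * (n - x) = ((2 * x - n) ^ 2 - n) / 4 := by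
  rw [Nat.cast_choose_two]
  ring

theorem ne_one_and_sub_one_sq_ne_add_one {d m : K} (hm₀ : m ≠ 0) (hm₁ : m ≠ 1)
    (h : d = 0 ∨ d ^ 2 = m) : d ≠ 1 ∧ (d - 1) ^ 2 ≠ m + 1 := by
  rcases h with rfl | rfl
  · refine ⟨zero_ne_one, fun h => hm₀ ?_⟩
    linear_combination -h
  · refine ⟨fun h => hm₁ (by rw [h, one_pow]), fun h => hm₀ ?_⟩
    have hd : d = 0 := by
      have : 2 * d = 0 := by linear_combination -h
      simpa using this
    rw [hd, zero_pow two_ne_zero]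

end

theorem stmt1_general (n η : ℕ) (hn : 1 < n)
    (h : ((η : ℚ) - (n : ℚ) / 2 = 0) ∨
         ((n.choose 2 : ℚ) / 2 - (η : ℚ) * ((n : ℚ) - (η : ℚ)) = 0)) :
    ((η : ℚ) - ((n : ℚ) + 1) / 2 ≠ 0) ∧
    (((n + 1).choose 2 : ℚ) / 2 - (η : ℚ) * ((n : ℚ) + 1 - (η : ℚ)) ≠ 0) := by
  set d : ℚ := 2 * η - n with hd
  have hs₂ : (η : ℚ) - n / 2 = d / 2 := by ring
  have hs₂' : (η : ℚ) - (n + 1) / 2 = (d - 1) / 2 := by ring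
  have hs₄' : ((n + 1).choose 2 : ℚ) / 2 - η * (n + 1 - η) = ((d - 1) ^ 2 - (n + 1)) / 4 := by
    have := choose_two_div_two_sub_mul_eq (n + 1) (η : ℚ)
    push_cast at this
    rw [this]
    ring
  rw [hs₂, choose_two_div_two_sub_mul_eq, ← hd] at h
  rw [hs₂', hs₄']
  simp only [div_eq_zero_iff, two_ne_zero, four_ne_zero, or_false, sub_eq_zero] at h
  have hn₀ : (n : ℚ) ≠ 0 := by exact_mod_cast (by omega : n ≠ 0)
  have hn₁ : (n : ℚ) ≠ 1 := by exact_mod_cast hn.ne'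
  obtain ⟨hd₁, hd₂⟩ := ne_one_and_sub_one_sq_ne_add_one hn₀ hn₁ h
  exact ⟨div_ne_zero (sub_ne_zero.mpr hd₁) two_ne_zero,
    div_ne_zero (sub_ne_zero.mpr hd₂) four_ne_zero⟩

/-- If `s₂(n,η) = η − n/2 = 0` or `s₄(n,η) = (1/2)·C(n,2) − η(n−η) = 0`, then for
`n > 1` the ancilla-adjusted quantities `s'₂(n,η) = η − (n+1)/2` and
`s'₄(n,η) = (1/2)·C(n+1,2) − η(n+1−η)` are both nonzero. -/
theorem stmt1 (n η : ℕ) (hn : 1 < n) (hη : η ≤ n)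
    (h : ((η : ℚ) - (n : ℚ) / 2 = 0) ∨
         ((n.choose 2 : ℚ) / 2 - (η : ℚ) * ((n : ℚ) - (η : ℚ)) = 0)) :
    ((η : ℚ) - ((n : ℚ) + 1) / 2 ≠ 0) ∧
    (((n + 1).choose 2 : ℚ) / 2 - (η : ℚ) * ((n : ℚ) + 1 - (η : ℚ)) ≠ 0) :=
  stmt1_general n η hn h
end

section
/- For block-diagonal Q = Q_↑ ⊕ Q_↓ ∈ O(2n_↑) × O(2n_↓), the fermionic Gaussian unitary factorizes as U_Q = U_{Q_↑} ⊗ (P_↓^s U_{Q_↓}), where s = 1 if det(Q_↑) = −1 and s = 0 otherwise, and P_↓ is the parity operator on the spin-down sector; in particular this tensor product correctly implements γ_{μ,↓} ↦ ∑_ν (Q_↓)_{νμ} γ_{ν,↓} where γ_{μ,↓} = P_↑ ⊗ c_{μ,↓}. -/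
/-!
Conjugating by `U↑ ⊗ U↓` alone would send `γ_{μ,↓} = P↑ ⊗ c_{μ,↓}` to
`det(Q↑) · (P↑ ⊗ U↓ c_μ U↓†)`, because `U↑ P↑ U↑† = det(Q↑) P↑`. Since `P↓` anticommutes with
each `c_{μ,↓}`, conjugating the spin-down factor by `P↓^s` multiplies it by `(-1)^s = det(Q↑)`,
which cancels this sign; on the spin-up Majoranas the extra factor `P↓^s` acts on `1` and is
invisible because `P↓² = 1`.
-/

open scoped TensorProduct

section Conjugation

variable {R A : Type*} [CommRing R] [Ring A] [Algebra R A]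

theorem smul_conj_eq_of_mul_eq_smul_mul {P U V : A} {ε : R}
    (hPU : P * U = ε • (U * P)) (hUV : U * V = 1) : ε • (U * P * V) = P := by
  calc ε • (U * P * V) = P * U * V := by rw [hPU, smul_mul_assoc]
    _ = P := by rw [mul_assoc, hUV, mul_one]

theorem pow_mul_pow_self_of_mul_self_eq_one {P : A} (hPP : P * P = 1) (s : ℕ) :
    P ^ s * P ^ s = 1 := by
  rw [← pow_add, ← two_mul, pow_mul, sq, hPP, one_pow]

theorem pow_mul_mul_pow_of_mul_eq_neg {P c : A} (hPP : P * P = 1) (hPc : P * c = -(c * P))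
    (s : ℕ) : P ^ s * c * P ^ s = (-1 : R) ^ s • c := by
  induction s with
  | zero => simp
  | succ s ih =>
    calc P ^ (s + 1) * c * P ^ (s + 1) = P * (P ^ s * c * P ^ s) * P := by
          nth_rewrite 1 [pow_succ']; rw [pow_succ]; noncomm_ring
      _ = (-1 : R) ^ s • (P * c * P) := by rw [ih, mul_smul_comm, smul_mul_assoc]
      _ = (-1 : R) ^ (s + 1) • c := by
          rw [hPc, neg_mul, mul_assoc, hPP, mul_one, pow_succ, mul_smul, neg_one_smul]

theorem mul_sum_smul_eq_neg_of_mul_eq_neg {ι : Type*} [Fintype ι] {P : A} {c : ι → A}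
    (hPc : ∀ i, P * c i = -(c i * P)) (a : ι → R) :
    P * ∑ i, a i • c i = -((∑ i, a i • c i) * P) := by
  simp only [Finset.mul_sum, Finset.sum_mul, ← Finset.sum_neg_distrib, mul_smul_comm,
    smul_mul_assoc, hPc, smul_neg]

end Conjugation

theorem stmt11_general
    {A1 A2 : Type*} [Ring A1] [Ring A2] [Algebra ℂ A1] [Algebra ℂ A2]
    {n1 n2 : ℕ}
    (c1 : Fin (2 * n1) → A1) (c2 : Fin (2 * n2) → A2)
    (Q1 : Matrix (Fin (2 * n1)) (Fin (2 * n1)) ℂ)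
    (Q2 : Matrix (Fin (2 * n2)) (Fin (2 * n2)) ℂ)
    (U1 V1 P1 : A1) (U2 V2 P2 : A2) (ε : ℂ) (s : ℕ)
    (hdet : (ε = 1 ∧ s = 0) ∨ (ε = -1 ∧ s = 1))
    (hUV1 : U1 * V1 = 1)
    (hUV2 : U2 * V2 = 1)
    (hcov1 : ∀ μ, U1 * c1 μ * V1 = ∑ ν, Q1 ν μ • c1 ν)
    (hcov2 : ∀ μ, U2 * c2 μ * V2 = ∑ ν, Q2 ν μ • c2 ν)
    (hP1U : P1 * U1 = ε • (U1 * P1))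
    (hP2sq : P2 * P2 = 1)
    (hP2c : ∀ μ, P2 * c2 μ = -(c2 μ * P2)) :
    (∀ μ,
      (U1 ⊗ₜ[ℂ] (P2 ^ s * U2)) * (c1 μ ⊗ₜ[ℂ] (1 : A2)) * (V1 ⊗ₜ[ℂ] (V2 * P2 ^ s))
        = ∑ ν, Q1 ν μ • (c1 ν ⊗ₜ[ℂ] (1 : A2))) ∧
    (∀ μ,
      (U1 ⊗ₜ[ℂ] (P2 ^ s * U2)) * (P1 ⊗ₜ[ℂ] c2 μ) * (V1 ⊗ₜ[ℂ] (V2 * P2 ^ s))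
        = ∑ ν, Q2 ν μ • (P1 ⊗ₜ[ℂ] c2 ν)) := by
  obtain rfl : ε = (-1) ^ s := by rcases hdet with ⟨rfl, rfl⟩ | ⟨rfl, rfl⟩ <;> norm_num
  have hP2U2 : P2 ^ s * U2 * (V2 * P2 ^ s) = 1 := by
    rw [mul_assoc, ← mul_assoc U2, hUV2, one_mul, pow_mul_pow_self_of_mul_self_eq_one hP2sq]
  have hP2cov2 (μ) :
      P2 ^ s * U2 * c2 μ * (V2 * P2 ^ s) = (-1 : ℂ) ^ s • ∑ ν, Q2 ν μ • c2 ν := by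
    rw [← pow_mul_mul_pow_of_mul_eq_neg hP2sq (mul_sum_smul_eq_neg_of_mul_eq_neg hP2c _),
      ← hcov2]
    simp only [mul_assoc]
  refine ⟨fun μ => ?_, fun μ => ?_⟩
  · rw [Algebra.TensorProduct.tmul_mul_tmul, Algebra.TensorProduct.tmul_mul_tmul, mul_one,
      hcov1, hP2U2, TensorProduct.sum_tmul]
    simp only [TensorProduct.smul_tmul']
  · rw [Algebra.TensorProduct.tmul_mul_tmul, Algebra.TensorProduct.tmul_mul_tmul, hP2cov2,
      ← TensorProduct.smul_tmul, smul_conj_eq_of_mul_eq_smul_mul hP1U hUV1,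
      TensorProduct.tmul_sum]
    simp only [TensorProduct.tmul_smul]

/-- Spin-adapted factorization of fermionic Gaussian unitaries: for block-diagonal
`Q = Q↑ ⊕ Q↓`, the unitary `U↑ ⊗ (P↓^s U↓)` (with `s = 1` iff `det Q↑ = −1`)
implements the correct Gaussian covariance on both spin sectors; in particular
`γ_{μ,↓} = P↑ ⊗ c_{μ,↓} ↦ ∑_ν (Q↓)_{νμ} γ_{ν,↓}`.

Here the sector data are abstract: `c₁, c₂` are the Majorana operators of the two
sectors, `U₁, U₂` the sector Gaussian unitaries (with two-sided inverses `V₁, V₂`),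
`P₁, P₂` the sector parity operators, and `ε = det Q↑ = ±1`, all satisfying the
standard relations. -/
theorem stmt11
    {A1 A2 : Type*} [Ring A1] [Ring A2] [Algebra ℂ A1] [Algebra ℂ A2]
    {n1 n2 : ℕ}
    (c1 : Fin (2 * n1) → A1) (c2 : Fin (2 * n2) → A2)
    (Q1 : Matrix (Fin (2 * n1)) (Fin (2 * n1)) ℂ)
    (Q2 : Matrix (Fin (2 * n2)) (Fin (2 * n2)) ℂ)
    (U1 V1 P1 : A1) (U2 V2 P2 : A2) (ε : ℂ) (s : ℕ)
    (hdet : (ε = 1 ∧ s = 0) ∨ (ε = -1 ∧ s = 1))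
    (hUV1 : U1 * V1 = 1) (hVU1 : V1 * U1 = 1)
    (hUV2 : U2 * V2 = 1) (hVU2 : V2 * U2 = 1)
    (hcov1 : ∀ μ, U1 * c1 μ * V1 = ∑ ν, Q1 ν μ • c1 ν)
    (hcov2 : ∀ μ, U2 * c2 μ * V2 = ∑ ν, Q2 ν μ • c2 ν)
    (hP1U : P1 * U1 = ε • (U1 * P1))
    (hP1sq : P1 * P1 = 1) (hP2sq : P2 * P2 = 1)
    (hP1c : ∀ μ, P1 * c1 μ = -(c1 μ * P1))
    (hP2c : ∀ μ, P2 * c2 μ = -(c2 μ * P2)) :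
    (∀ μ,
      (U1 ⊗ₜ[ℂ] (P2 ^ s * U2)) * (c1 μ ⊗ₜ[ℂ] (1 : A2)) * (V1 ⊗ₜ[ℂ] (V2 * P2 ^ s))
        = ∑ ν, Q1 ν μ • (c1 ν ⊗ₜ[ℂ] (1 : A2))) ∧
    (∀ μ,
      (U1 ⊗ₜ[ℂ] (P2 ^ s * U2)) * (P1 ⊗ₜ[ℂ] c2 μ) * (V1 ⊗ₜ[ℂ] (V2 * P2 ^ s))
        = ∑ ν, Q2 ν μ • (P1 ⊗ₜ[ℂ] c2 ν)) :=
  stmt11_general c1 c2 Q1 Q2 U1 V1 P1 U2 V2 P2 ε s hdet hUV1 hUV2 hcov1 hcov2 hP1U hP2sq hP2c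
end

section
/- Ratio-estimator error bound: let r(x,y) = x/y, and suppose |X̄ − x₀| ≤ ε̃ and |Ȳ − y₀| ≤ ε̃ with y₀ = ξ > 0, ε̃ < ξ, and |x₀/y₀| ≤ B. Then |X̄/Ȳ − x₀/y₀| ≤ (B+1)ε̃/ξ + (1/(ξ−ε̃)²)·((ξB+ε̃)/(ξ−ε̃) + 1)·ε̃². -/
/-
With `y = ξ`, write `X / Y - x / y = ((X - x) y - x (Y - y)) / (Y y)`: the numerator is at
most `(B + 1) ε y` and the denominator at least `(y - ε) y`, so the error is at most
`(B + 1) ε / (ξ - ε)`. The identity `1 / (ξ - ε) = 1 / ξ + ε / (ξ (ξ - ε))` together with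
`ξ (ξ - ε) ≥ (ξ - ε)³ / ξ` then gives the stated bound, whose quadratic term is exactly
`ξ (B + 1) ε² / (ξ - ε)³`.
-/

theorem abs_div_sub_div_le_of_abs_sub_le {X Y x y ε B : ℝ} (hεy : ε < y)
    (hx : |x| ≤ B * y) (hX : |X - x| ≤ ε) (hY : |Y - y| ≤ ε) :
    |X / Y - x / y| ≤ (B + 1) * ε / (y - ε) := by
  have hε : 0 ≤ ε := (abs_nonneg _).trans hX
  have hy : 0 < y := hε.trans_lt hεy
  have hyε : 0 < y - ε := sub_pos.2 hεy
  have hYy : y - ε ≤ Y := by linarith [(abs_le.1 hY).1]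
  have hY0 : 0 < Y := hyε.trans_le hYy
  have hnum : |(X - x) * y - x * (Y - y)| ≤ (B + 1) * ε * y := by
    calc |(X - x) * y - x * (Y - y)| ≤ |X - x| * y + |x| * |Y - y| := by
          simpa only [abs_mul, abs_of_pos hy] using abs_sub ((X - x) * y) (x * (Y - y))
      _ ≤ ε * y + B * y * ε := by
          gcongr
          exact (abs_nonneg x).trans hx
      _ = (B + 1) * ε * y := by ring
  have hB : 0 ≤ B + 1 := by nlinarith [abs_nonneg x]
  calc |X / Y - x / y| = |(X - x) * y - x * (Y - y)| / (Y * y) := by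
        rw [← abs_of_pos (mul_pos hY0 hy), ← abs_div]
        congr 1
        field_simp
        ring
    _ ≤ (B + 1) * ε * y / ((y - ε) * y) := by gcongr
    _ = (B + 1) * ε / (y - ε) := mul_div_mul_right _ _ hy.ne'

theorem div_sub_le_div_add_div_pow_three {c ε ξ : ℝ} (hc : 0 ≤ c) (hε : 0 ≤ ε) (hεξ : ε < ξ) :
    c / (ξ - ε) ≤ c / ξ + ξ * c * ε / (ξ - ε) ^ 3 := by
  have hξ : 0 < ξ := hε.trans_lt hεξ
  have hξε : 0 < ξ - ε := sub_pos.2 hεξ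
  have hexpand : c / (ξ - ε) = c / ξ + c * ε / (ξ * (ξ - ε)) := by
    field_simp
    ring
  rw [hexpand, add_le_add_iff_left, div_le_div_iff₀ (by positivity) (by positivity)]
  have hsq : (ξ - ε) ^ 2 ≤ ξ ^ 2 := by gcongr; linarith
  calc c * ε * (ξ - ε) ^ 3 = c * ε * (ξ - ε) * (ξ - ε) ^ 2 := by ring
    _ ≤ c * ε * (ξ - ε) * ξ ^ 2 := by gcongr
    _ = ξ * c * ε * (ξ * (ξ - ε)) := by ring

theorem stmt14_general (Xb Yb x0 y0 ε ξ B : ℝ)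
    (hy0 : y0 = ξ) (hεξ : ε < ξ)
    (hB : |x0| ≤ B * ξ)
    (hX : |Xb - x0| ≤ ε) (hY : |Yb - y0| ≤ ε) :
    |Xb / Yb - x0 / y0| ≤
      (B + 1) * ε / ξ + (1 / (ξ - ε) ^ 2) * ((ξ * B + ε) / (ξ - ε) + 1) * ε ^ 2 := by
  subst hy0
  have hε : 0 ≤ ε := (abs_nonneg _).trans hX
  have hB1 : 0 ≤ (B + 1) * ε := mul_nonneg (by nlinarith [abs_nonneg x0]) hε
  have hquadratic : (1 / (y0 - ε) ^ 2) * ((y0 * B + ε) / (y0 - ε) + 1) * ε ^ 2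
      = y0 * ((B + 1) * ε) * ε / (y0 - ε) ^ 3 := by
    have : y0 - ε ≠ 0 := (sub_pos.2 hεξ).ne'
    field_simp
    ring
  rw [hquadratic]
  exact (abs_div_sub_div_le_of_abs_sub_le hεξ hB hX hY).trans
    (div_sub_le_div_add_div_pow_three hB1 hε hεξ)

/-- Ratio-estimator error bound: if `|X̄ − x₀| ≤ ε̃`, `|Ȳ − y₀| ≤ ε̃` with
`y₀ = ξ > 0`, `0 < ε̃ < ξ`, and `|x₀| ≤ B·ξ`, then
`|X̄/Ȳ − x₀/y₀| ≤ (B+1)ε̃/ξ + (1/(ξ−ε̃)²)·((ξB+ε̃)/(ξ−ε̃) + 1)·ε̃²`. -/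
theorem stmt14 (Xb Yb x0 y0 ε ξ B : ℝ)
    (hy0 : y0 = ξ) (hξ : 0 < ξ) (hε : 0 < ε) (hεξ : ε < ξ)
    (hB : |x0| ≤ B * ξ)
    (hX : |Xb - x0| ≤ ε) (hY : |Yb - y0| ≤ ε) :
    |Xb / Yb - x0 / y0| ≤
      (B + 1) * ε / ξ + (1 / (ξ - ε) ^ 2) * ((ξ * B + ε) / (ξ - ε) + 1) * ε ^ 2 :=
  stmt14_general Xb Yb x0 y0 ε ξ B hy0 hεξ hB hX hY
end
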